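/- Let x, x¹ : [0, T₀] → 𝒳 be absolutely continuous curves in a convex set 𝒳 of diameter D, with ẋ(s) = −g(s) − η(s) + b(s) and ẋ¹(s) = −g¹(s) − η¹(s), where g(s) ∈ ∂f(x(s)), g¹(s) ∈ ∂f(x¹(s)), η(s) ∈ N_𝒳(x(s)), η¹(s) ∈ N_𝒳(x¹(s)), ‖b(s)‖ ≤ r, x(0) = x¹(0), and the subdifferential satisfies the one-sided Lipschitz condition (g_x − g_y)ᵀ(y − x) ≤ L‖x − y‖². Then ‖x(s) − x¹(s)‖² ≤ r·D·T₀·exp(L T₀) for all s ∈ [0, T₀]. -/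

import Mathlib

/-!
The difference `y = x - x¹` satisfies `⟪y, ẏ⟫ ≤ L‖y‖² + r‖y‖`: the subgradient terms are controlled
by the one-sided Lipschitz condition, the normal-cone terms have a sign because the normal cone is
a monotone operator, and the perturbation contributes at most `r‖y‖`. Grönwall's inequality for
`‖y‖`, run on the smooth surrogate `√(‖y‖² + η²)` and letting `η → 0`, gives
`‖y(s)‖ ≤ (r / L)(e^{Ls} - 1) ≤ r s e^{Ls}`, and `‖y(s)‖² ≤ D ‖y(s)‖` finishes the estimate.
-/

open Filter

/-- The Clarke subdifferential of a Clarke regular function, characterized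
variationally through its directional derivative `D`. -/
def clarkeSubdiff {d : ℕ} (D : EuclideanSpace ℝ (Fin d) → EuclideanSpace ℝ (Fin d) → ℝ)
    (x : EuclideanSpace ℝ (Fin d)) : Set (EuclideanSpace ℝ (Fin d)) :=
  {ζ | ∀ v, (inner ℝ ζ v : ℝ) ≤ D x v}

/-- The normal cone of a convex set `X` at `x`. -/
def normalCone {d : ℕ} (X : Set (EuclideanSpace ℝ (Fin d)))
    (x : EuclideanSpace ℝ (Fin d)) : Set (EuclideanSpace ℝ (Fin d)) :=
  {η | ∀ y ∈ X, (inner ℝ η (y - x) : ℝ) ≤ 0}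

open Set Real InnerProductSpace

theorem gronwallBound_δ_add (δ η K ε x : ℝ) :
    gronwallBound (δ + η) K ε x = gronwallBound δ K ε x + η * exp (K * x) := by
  unfold gronwallBound
  split_ifs with hK
  · rw [hK, zero_mul, exp_zero, mul_one]
    ring
  · ring

theorem gronwallBound_δ0_le {K ε : ℝ} (hK : 0 ≤ K) (hε : 0 ≤ ε) (x : ℝ) :
    gronwallBound 0 K ε x ≤ ε * x * exp (K * x) := by
  rcases hK.eq_or_lt with rfl | hKpos
  · simp [gronwallBound_K0]
  have hexp : exp (K * x) - 1 ≤ K * x * exp (K * x) := by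
    have h := mul_le_mul_of_nonneg_right (add_one_le_exp (-(K * x))) (exp_pos (K * x)).le
    rw [← exp_add, neg_add_cancel, exp_zero] at h
    linarith
  simp only [gronwallBound_of_K_ne_0 hKpos.ne', zero_mul, zero_add]
  calc ε / K * (exp (K * x) - 1) ≤ ε / K * (K * x * exp (K * x)) := by gcongr
    _ = ε * x * exp (K * x) := by field_simp

section

variable {F : Type*} [NormedAddCommGroup F] [InnerProductSpace ℝ F]

theorem sqrt_norm_sq_add_sq_le_gronwallBound {y y' : ℝ → F} {δ K ε η a b : ℝ}
    (hK : 0 ≤ K) (hε : 0 ≤ ε) (hη : 0 < η) (hy : ContinuousOn y (Icc a b))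
    (hy' : ∀ t ∈ Ico a b, HasDerivWithinAt y (y' t) (Ici t) t) (ha : ‖y a‖ ≤ δ)
    (bound : ∀ t ∈ Ico a b, ⟪y t, y' t⟫_ℝ ≤ K * ‖y t‖ ^ 2 + ε * ‖y t‖) :
    ∀ t ∈ Icc a b, √(‖y t‖ ^ 2 + η ^ 2) ≤ gronwallBound (δ + η) K ε (t - a) := by
  set ψ : ℝ → ℝ := fun t => √(‖y t‖ ^ 2 + η ^ 2)
  have hpos : ∀ t, 0 < ‖y t‖ ^ 2 + η ^ 2 := fun t => by positivity
  have hnorm_le : ∀ t, ‖y t‖ ≤ ψ t := fun t =>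
    le_sqrt_of_sq_le (le_add_of_nonneg_right (sq_nonneg η))
  have hψ' : ∀ t ∈ Ico a b, HasDerivWithinAt ψ (⟪y t, y' t⟫_ℝ / ψ t) (Ici t) t := by
    intro t ht
    convert ((hy' t ht).norm_sq.add_const (η ^ 2)).sqrt (hpos t).ne' using 1
    ring
  refine le_gronwallBound_of_liminf_deriv_right_le ?_
    (fun t ht _ hρ => (hψ' t ht).liminf_right_slope_le hρ) ?_ ?_
  · exact (((continuous_norm.comp_continuousOn hy).pow 2).add continuousOn_const).sqrt
  · calc ψ a ≤ √((‖y a‖ + η) ^ 2) := sqrt_le_sqrt (by nlinarith [norm_nonneg (y a)])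
      _ = ‖y a‖ + η := sqrt_sq (by positivity)
      _ ≤ δ + η := by linarith
  · intro t ht
    have hψt : 0 < ψ t := sqrt_pos.2 (hpos t)
    rw [div_le_iff₀ hψt]
    calc ⟪y t, y' t⟫_ℝ ≤ K * ‖y t‖ ^ 2 + ε * ‖y t‖ := bound t ht
      _ ≤ K * ψ t ^ 2 + ε * ψ t := by gcongr <;> exact hnorm_le t
      _ = (K * ψ t + ε) * ψ t := by ring

theorem norm_le_gronwallBound_of_inner_deriv_right_le {y y' : ℝ → F} {δ K ε a b : ℝ}
    (hK : 0 ≤ K) (hε : 0 ≤ ε) (hy : ContinuousOn y (Icc a b))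
    (hy' : ∀ t ∈ Ico a b, HasDerivWithinAt y (y' t) (Ici t) t) (ha : ‖y a‖ ≤ δ)
    (bound : ∀ t ∈ Ico a b, ⟪y t, y' t⟫_ℝ ≤ K * ‖y t‖ ^ 2 + ε * ‖y t‖) :
    ∀ t ∈ Icc a b, ‖y t‖ ≤ gronwallBound δ K ε (t - a) := by
  intro t ht
  refine le_of_forall_pos_le_add fun θ hθ => ?_
  have hexp : 0 < exp (K * (t - a)) := exp_pos _
  have hη : 0 < θ / exp (K * (t - a)) := div_pos hθ hexp
  calc ‖y t‖ ≤ √(‖y t‖ ^ 2 + (θ / exp (K * (t - a))) ^ 2) :=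
        le_sqrt_of_sq_le (le_add_of_nonneg_right (sq_nonneg _))
    _ ≤ gronwallBound (δ + θ / exp (K * (t - a))) K ε (t - a) :=
        sqrt_norm_sq_add_sq_le_gronwallBound hK hε hη hy hy' ha bound t ht
    _ = gronwallBound δ K ε (t - a) + θ := by
        rw [gronwallBound_δ_add, div_mul_cancel₀ _ hexp.ne']

end

theorem inner_sub_nonneg_of_mem_normalCone {d : ℕ} {X : Set (EuclideanSpace ℝ (Fin d))}
    {p q ηp ηq : EuclideanSpace ℝ (Fin d)} (hp : p ∈ X) (hq : q ∈ X)
    (hηp : ηp ∈ normalCone X p) (hηq : ηq ∈ normalCone X q) :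
    0 ≤ ⟪ηp - ηq, p - q⟫_ℝ := by
  have h₁ := hηp q hq
  have h₂ := hηq p hp
  rw [← neg_sub p q, inner_neg_right] at h₁
  rw [inner_sub_left]
  linarith

theorem inner_sub_velocity_le {d : ℕ} {X : Set (EuclideanSpace ℝ (Fin d))} {L r : ℝ}
    {p q gp gq ηp ηq β : EuclideanSpace ℝ (Fin d)} (hp : p ∈ X) (hq : q ∈ X)
    (hg : ⟪gp - gq, q - p⟫_ℝ ≤ L * ‖p - q‖ ^ 2)
    (hηp : ηp ∈ normalCone X p) (hηq : ηq ∈ normalCone X q) (hβ : ‖β‖ ≤ r) :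
    ⟪p - q, (-gp - ηp + β) - (-gq - ηq)⟫_ℝ ≤ L * ‖p - q‖ ^ 2 + r * ‖p - q‖ := by
  have hsplit : ⟪p - q, (-gp - ηp + β) - (-gq - ηq)⟫_ℝ =
      ⟪gp - gq, q - p⟫_ℝ - ⟪ηp - ηq, p - q⟫_ℝ + ⟪p - q, β⟫_ℝ := by
    rw [show (-gp - ηp + β) - (-gq - ηq) = -(gp - gq) - (ηp - ηq) + β by abel,
      inner_add_right, inner_sub_right, inner_neg_right, real_inner_comm (ηp - ηq),
      real_inner_comm (gp - gq), ← inner_neg_right, neg_sub]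
  have hβ' : ⟪p - q, β⟫_ℝ ≤ r * ‖p - q‖ :=
    (real_inner_le_norm _ _).trans (by rw [mul_comm]; gcongr)
  linarith [inner_sub_nonneg_of_mem_normalCone hp hq hηp hηq]

theorem gronwall_perturbation_bound_general (d : ℕ)
    (X : Set (EuclideanSpace ℝ (Fin d)))
    (Dd : ℝ) (hdiam : ∀ a ∈ X, ∀ b ∈ X, ‖a - b‖ ≤ Dd)
    (Dder : EuclideanSpace ℝ (Fin d) → EuclideanSpace ℝ (Fin d) → ℝ)
    (L : ℝ) (hL : 0 < L)
    (honesided : ∀ p ∈ X, ∀ q ∈ X, ∀ gp ∈ clarkeSubdiff Dder p,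
      ∀ gq ∈ clarkeSubdiff Dder q, (inner ℝ (gp - gq) (q - p) : ℝ) ≤ L * ‖p - q‖ ^ 2)
    (T₀ : ℝ) (r : ℝ) (hr : 0 ≤ r)
    (x x1 g g1 η η1 b : ℝ → EuclideanSpace ℝ (Fin d))
    (hxX : ∀ s ∈ Set.Icc (0 : ℝ) T₀, x s ∈ X)
    (hx1X : ∀ s ∈ Set.Icc (0 : ℝ) T₀, x1 s ∈ X)
    (hgmem : ∀ s ∈ Set.Icc (0 : ℝ) T₀, g s ∈ clarkeSubdiff Dder (x s))
    (hg1mem : ∀ s ∈ Set.Icc (0 : ℝ) T₀, g1 s ∈ clarkeSubdiff Dder (x1 s))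
    (hηmem : ∀ s ∈ Set.Icc (0 : ℝ) T₀, η s ∈ normalCone X (x s))
    (hη1mem : ∀ s ∈ Set.Icc (0 : ℝ) T₀, η1 s ∈ normalCone X (x1 s))
    (hb : ∀ s ∈ Set.Icc (0 : ℝ) T₀, ‖b s‖ ≤ r)
    (hderiv : ∀ s ∈ Set.Icc (0 : ℝ) T₀, HasDerivAt x (-(g s) - η s + b s) s)
    (hderiv1 : ∀ s ∈ Set.Icc (0 : ℝ) T₀, HasDerivAt x1 (-(g1 s) - η1 s) s)
    (hinit : x 0 = x1 0) :
    ∀ s ∈ Set.Icc (0 : ℝ) T₀,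
      ‖x s - x1 s‖ ^ 2 ≤ r * Dd * T₀ * Real.exp (L * T₀) := by
  intro s hs
  have hdiff : ∀ t ∈ Icc 0 T₀,
      HasDerivAt (x - x1) ((-(g t) - η t + b t) - (-(g1 t) - η1 t)) t :=
    fun t ht => (hderiv t ht).sub (hderiv1 t ht)
  have hslope : ∀ t ∈ Icc 0 T₀, ⟪x t - x1 t, (-(g t) - η t + b t) - (-(g1 t) - η1 t)⟫_ℝ ≤
      L * ‖x t - x1 t‖ ^ 2 + r * ‖x t - x1 t‖ := fun t ht =>
    inner_sub_velocity_le (hxX t ht) (hx1X t ht)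
      (honesided _ (hxX t ht) _ (hx1X t ht) _ (hgmem t ht) _ (hg1mem t ht))
      (hηmem t ht) (hη1mem t ht) (hb t ht)
  have hgrowth : ‖x s - x1 s‖ ≤ gronwallBound 0 L r s := by
    simpa using norm_le_gronwallBound_of_inner_deriv_right_le hL.le hr
      (fun t ht => (hdiff t ht).continuousAt.continuousWithinAt)
      (fun t ht => (hdiff t (Ico_subset_Icc_self ht)).hasDerivWithinAt)
      (by simp [hinit]) (fun t ht => hslope t (Ico_subset_Icc_self ht)) s hs
  have hperturb : ‖x s - x1 s‖ ≤ r * T₀ * exp (L * T₀) :=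
    hgrowth.trans <| (gronwallBound_mono le_rfl hr hL.le hs.2).trans <|
      gronwallBound_δ0_le hL.le hr T₀
  have hsize : ‖x s - x1 s‖ ≤ Dd := hdiam _ (hxX s hs) _ (hx1X s hs)
  calc ‖x s - x1 s‖ ^ 2 = ‖x s - x1 s‖ * ‖x s - x1 s‖ := sq _
    _ ≤ Dd * (r * T₀ * exp (L * T₀)) :=
        mul_le_mul hsize hperturb (norm_nonneg _) ((norm_nonneg _).trans hsize)
    _ = r * Dd * T₀ * exp (L * T₀) := by ring

/-- Grönwall robustness estimate: if `x, x¹ : [0, T₀] → 𝒳` are curves in a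
convex set `𝒳` of diameter `Dd` with `ẋ(s) = −g(s) − η(s) + b(s)` and
`ẋ¹(s) = −g¹(s) − η¹(s)`, where `g(s) ∈ ∂f(x(s))`, `g¹(s) ∈ ∂f(x¹(s))`,
`η(s) ∈ N_𝒳(x(s))`, `η¹(s) ∈ N_𝒳(x¹(s))`, `‖b(s)‖ ≤ r`, `x(0) = x¹(0)`, and
the subdifferential is one-sided Lipschitz with constant `L`, then
`‖x(s) − x¹(s)‖² ≤ r·Dd·T₀·exp(L·T₀)` on `[0, T₀]`. -/
theorem gronwall_perturbation_bound (d : ℕ)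
    (X : Set (EuclideanSpace ℝ (Fin d))) (hXconv : Convex ℝ X)
    (Dd : ℝ) (hdiam : ∀ a ∈ X, ∀ b ∈ X, ‖a - b‖ ≤ Dd)
    (f : EuclideanSpace ℝ (Fin d) → ℝ) (Lf : NNReal) (hf : LipschitzWith Lf f)
    (Dder : EuclideanSpace ℝ (Fin d) → EuclideanSpace ℝ (Fin d) → ℝ)
    (hD : ∀ x v, Tendsto (fun t : ℝ => (f (x + t • v) - f x) / t)
      (nhdsWithin 0 (Set.Ioi 0)) (nhds (Dder x v)))
    (L : ℝ) (hL : 0 < L)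
    (honesided : ∀ p ∈ X, ∀ q ∈ X, ∀ gp ∈ clarkeSubdiff Dder p,
      ∀ gq ∈ clarkeSubdiff Dder q, (inner ℝ (gp - gq) (q - p) : ℝ) ≤ L * ‖p - q‖ ^ 2)
    (T₀ : ℝ) (hT₀ : 0 < T₀) (r : ℝ) (hr : 0 ≤ r)
    (x x1 g g1 η η1 b : ℝ → EuclideanSpace ℝ (Fin d))
    (hxX : ∀ s ∈ Set.Icc (0 : ℝ) T₀, x s ∈ X)
    (hx1X : ∀ s ∈ Set.Icc (0 : ℝ) T₀, x1 s ∈ X)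
    (hgmem : ∀ s ∈ Set.Icc (0 : ℝ) T₀, g s ∈ clarkeSubdiff Dder (x s))
    (hg1mem : ∀ s ∈ Set.Icc (0 : ℝ) T₀, g1 s ∈ clarkeSubdiff Dder (x1 s))
    (hηmem : ∀ s ∈ Set.Icc (0 : ℝ) T₀, η s ∈ normalCone X (x s))
    (hη1mem : ∀ s ∈ Set.Icc (0 : ℝ) T₀, η1 s ∈ normalCone X (x1 s))
    (hb : ∀ s ∈ Set.Icc (0 : ℝ) T₀, ‖b s‖ ≤ r)
    (hderiv : ∀ s ∈ Set.Icc (0 : ℝ) T₀, HasDerivAt x (-(g s) - η s + b s) s)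
    (hderiv1 : ∀ s ∈ Set.Icc (0 : ℝ) T₀, HasDerivAt x1 (-(g1 s) - η1 s) s)
    (hinit : x 0 = x1 0) :
    ∀ s ∈ Set.Icc (0 : ℝ) T₀,
      ‖x s - x1 s‖ ^ 2 ≤ r * Dd * T₀ * Real.exp (L * T₀) :=
  gronwall_perturbation_bound_general d X Dd hdiam Dder L hL honesided T₀ r hr x x1 g g1 η η1 b hxX
    hx1X hgmem hg1mem hηmem hη1mem hb hderiv hderiv1 hinit
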